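/- Let P ∈ Gr_{m,n}, H ∈ T_P, and G₀ ∈ T_P. Set P(t) := exp(t[H,P]) P exp(−t[H,P]) and G(t) := exp(t[H,P]) G₀ exp(−t[H,P]). Then G'(t) = [[H,P], G(t)] and the tangential projection of G'(t) at P(t) vanishes: [P(t),[P(t), G'(t)]] = 0 for all t ∈ ℝ. (This expresses that G(t) is the parallel transport of G₀ along the geodesic P(t).) -/

import Mathlib

open Matrix

/-- The Grassmannian `Gr_{m,n}`: Hermitian rank-`m` projection matrices in `ℂ^{n×n}`. -/
def Grassmannian (m n : ℕ) : Set (Matrix (Fin n) (Fin n) ℂ) :=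
  {P | Pᴴ = P ∧ P * P = P ∧ Matrix.trace P = (m : ℂ)}

/-- The tangent space of the Grassmannian at `P`. -/
def tangentSpace (n : ℕ) (P : Matrix (Fin n) (Fin n) ℂ) : Set (Matrix (Fin n) (Fin n) ℂ) :=
  {H | ∃ Ω : Matrix (Fin n) (Fin n) ℂ, Ωᴴ = -Ω ∧ H = P * Ω - Ω * P}

/-- The matrix commutator `[A,B] = AB − BA`. -/
noncomputable def matComm {n : ℕ} (A B : Matrix (Fin n) (Fin n) ℂ) :
    Matrix (Fin n) (Fin n) ℂ :=
  A * B - B * A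

/-- Parallel transport of `G₀` along the geodesic: `G(t) = exp(t[H,P]) G₀ exp(−t[H,P])`. -/
noncomputable def transported {n : ℕ} (P H G₀ : Matrix (Fin n) (Fin n) ℂ) (t : ℝ) :
    Matrix (Fin n) (Fin n) ℂ :=
  NormedSpace.exp ((t : ℂ) • matComm H P) * G₀ *
    NormedSpace.exp (-((t : ℂ) • matComm H P))

/-- The geodesic `P(t) = exp(t[H,P]) P exp(−t[H,P])`. -/
noncomputable def geoCurve {n : ℕ} (P H : Matrix (Fin n) (Fin n) ℂ) (t : ℝ) :
    Matrix (Fin n) (Fin n) ℂ :=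
  NormedSpace.exp ((t : ℂ) • matComm H P) * P *
    NormedSpace.exp (-((t : ℂ) • matComm H P))

section Aux

open NormedSpace

attribute [local instance] Matrix.linftyOpSemiNormedRing Matrix.linftyOpNormedRing
  Matrix.linftyOpNormedAlgebra

variable {n : ℕ}

/-- Entrywise projection of a matrix-valued derivative. -/
lemma hasDerivAt_entry {f : ℝ → Matrix (Fin n) (Fin n) ℂ} {D : Matrix (Fin n) (Fin n) ℂ}
    {t : ℝ} (h : HasDerivAt f D t) (i j : Fin n) :
    HasDerivAt (fun s => f s i j) (D i j) t := by
  let L : Matrix (Fin n) (Fin n) ℂ →ₗ[ℝ] ℂ :=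
    { toFun := fun M => M i j, map_add' := fun _ _ => rfl, map_smul' := fun _ _ => rfl }
  exact (LinearMap.toContinuousLinearMap L).hasFDerivAt.comp_hasDerivAt t h

lemma exp_coe_smul (s : ℝ) (B : Matrix (Fin n) (Fin n) ℂ) :
    exp ((s : ℂ) • B) = exp (s • B) := by
  rw [Complex.coe_smul]

/-- The transported tensor satisfies the expected ODE, as matrices. -/
lemma transported_hasDerivAt (P H G₀ : Matrix (Fin n) (Fin n) ℂ) (t : ℝ) :
    HasDerivAt (fun s => transported P H G₀ s)
      (matComm (matComm H P) (transported P H G₀ t)) t := by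
  set A := matComm H P with hA
  have hfun : (fun s : ℝ => transported P H G₀ s)
      = fun s : ℝ => exp (s • A) * G₀ * exp (s • (-A)) := by
    funext s
    rw [transported, ← hA, ← smul_neg, exp_coe_smul, exp_coe_smul]
  have h1 := hasDerivAt_exp_smul_const (𝕂 := ℝ) A t
  have h2 := hasDerivAt_exp_smul_const (𝕂 := ℝ) (-A) t
  have h3 := (h1.mul_const G₀).mul h2
  rw [hfun]
  refine h3.congr_deriv ?_
  have hT : transported P H G₀ t = exp (t • A) * G₀ * exp (t • (-A)) := by
    rw [transported, ← hA, ← smul_neg, exp_coe_smul, exp_coe_smul]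
  have key : A * exp (t • A) = exp (t • A) * A :=
    (((Commute.refl A).smul_right t).exp_right).eq
  rw [matComm, hT]
  set E₁ := exp (t • A)
  set E₂ := exp (t • (-A))
  rw [show A * (E₁ * G₀ * E₂) = A * E₁ * (G₀ * E₂) from by noncomm_ring, key]
  noncomm_ring

end Aux

/-- Core algebraic fact: for `H, G₀` tangent at `P`, `[[H,P],G₀]` commutes with `P`. -/
lemma comm_core {n : ℕ} {P H G₀ : Matrix (Fin n) (Fin n) ℂ} (hP2 : P * P = P)
    (hphp : P * H * P = 0) (hpgp : P * G₀ * P = 0)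
    (hg : P * G₀ + G₀ * P = G₀) :
    matComm P (matComm (matComm H P) G₀) = 0 := by
  have hg2 : G₀ * P = G₀ - P * G₀ := eq_sub_of_add_eq' hg
  have c1 : P * (H * (G₀ * P)) = P * (H * G₀) := by
    have e : P * (H * (G₀ - P * G₀)) = P * (H * G₀) - P * H * P * G₀ := by noncomm_ring
    rw [hg2, e, hphp]
    noncomm_ring
  have c2 : G₀ * H * P = P * (G₀ * (H * P)) := by
    have hg3 : G₀ = P * G₀ + G₀ * P := hg.symm
    have e : (P * G₀ + G₀ * P) * H * P = P * (G₀ * (H * P)) + G₀ * (P * H * P) := by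
      noncomm_ring
    calc G₀ * H * P = (P * G₀ + G₀ * P) * H * P := by rw [← hg3]
      _ = P * (G₀ * (H * P)) + G₀ * (P * H * P) := e
      _ = P * (G₀ * (H * P)) := by rw [hphp]; noncomm_ring
  have step1 : matComm P (matComm (matComm H P) G₀)
      = (P * H * P) * G₀ - (P * P) * (H * G₀) - P * (G₀ * (H * P)) + (P * G₀ * P) * H
        - H * (P * G₀ * P) + P * (H * (G₀ * P)) + (G₀ * H) * (P * P) - G₀ * (P * H * P) := by
    simp only [matComm]
    noncomm_ring
  rw [step1, hphp, hpgp, hP2, c1]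
  rw [show (G₀ * H) * P = G₀ * H * P from rfl, c2]
  noncomm_ring

/-- Tangent vectors satisfy `P X P = 0` and `P X + X P = X`. -/
lemma tangent_facts {n : ℕ} {P X : Matrix (Fin n) (Fin n) ℂ} (hP2 : P * P = P)
    (hX : X ∈ tangentSpace n P) : P * X * P = 0 ∧ P * X + X * P = X := by
  obtain ⟨Ω, -, rfl⟩ := hX
  constructor
  · have e : P * (P * Ω - Ω * P) * P = (P * P) * (Ω * P) - (P * Ω) * (P * P) := by noncomm_ring
    rw [e, hP2]
    noncomm_ring
  · have e : P * (P * Ω - Ω * P) + (P * Ω - Ω * P) * P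
        = (P * P) * Ω - P * (Ω * P) + (P * Ω) * P - Ω * (P * P) := by noncomm_ring
    rw [e, hP2]
    noncomm_ring

section Main

open NormedSpace

attribute [local instance] Matrix.linftyOpSemiNormedRing Matrix.linftyOpNormedRing
  Matrix.linftyOpNormedAlgebra

/-- Let `P ∈ Gr_{m,n}`, `H ∈ T_P` and `G₀ ∈ T_P`. With
`P(t) = exp(t[H,P]) P exp(−t[H,P])` and `G(t) = exp(t[H,P]) G₀ exp(−t[H,P])`, the
(entrywise) derivative of `G` satisfies `G'(t) = [[H,P],G(t)]`, and the tangential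
projection of `G'(t)` at `P(t)` vanishes: `[P(t),[P(t),G'(t)]] = 0` for all `t ∈ ℝ`. -/
theorem parallel_transport_equation (m n : ℕ) (hm : 0 < m) (hmn : m < n)
    (P H G₀ : Matrix (Fin n) (Fin n) ℂ) (hP : P ∈ Grassmannian m n)
    (hH : H ∈ tangentSpace n P) (hG₀ : G₀ ∈ tangentSpace n P) :
    (∀ (t : ℝ) (i j : Fin n),
      HasDerivAt (fun s => transported P H G₀ s i j)
        (matComm (matComm H P) (transported P H G₀ t) i j) t) ∧
    ∀ t : ℝ,
      matComm (geoCurve P H t)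
        (matComm (geoCurve P H t) (matComm (matComm H P) (transported P H G₀ t))) = 0 := by
  have hP2 : P * P = P := hP.2.1
  obtain ⟨hphp, hh⟩ := tangent_facts hP2 hH
  obtain ⟨hpgp, hg⟩ := tangent_facts hP2 hG₀
  constructor
  · intro t i j
    exact hasDerivAt_entry (transported_hasDerivAt P H G₀ t) i j
  · intro t
    set A := matComm H P with hA
    set x : Matrix (Fin n) (Fin n) ℂ := (t : ℂ) • A with hx
    set U := exp x with hU
    set V := exp (-x) with hV
    have hUV : U * V = 1 := by
      rw [hU, hV, ← Matrix.exp_add_of_commute _ _ ((Commute.refl x).neg_right), add_neg_cancel, exp_zero]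
    have hVU : V * U = 1 := by
      rw [hU, hV, ← Matrix.exp_add_of_commute _ _ ((Commute.refl x).neg_left), neg_add_cancel, exp_zero]
    have hAx : Commute A x := (Commute.refl A).smul_right (t : ℂ)
    have hAU : A * U = U * A := (hAx.exp_right).eq
    have hAV : A * V = V * A := (hAx.neg_right.exp_right).eq
    have hgeo : geoCurve P H t = U * P * V := rfl
    have htr : transported P H G₀ t = U * G₀ * V := rfl
    have hconj : ∀ X Y : Matrix (Fin n) (Fin n) ℂ,
        matComm (U * X * V) (U * Y * V) = U * matComm X Y * V := by
      intro X Y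
      have e1 : (U * X * V) * (U * Y * V) = U * X * (V * U) * (Y * V) := by noncomm_ring
      have e2 : (U * Y * V) * (U * X * V) = U * Y * (V * U) * (X * V) := by noncomm_ring
      rw [matComm, e1, e2, hVU, matComm]
      noncomm_ring
    have hAcomm : matComm A (U * G₀ * V) = U * matComm A G₀ * V := by
      rw [matComm, matComm]
      rw [show A * (U * G₀ * V) = A * U * (G₀ * V) from by noncomm_ring, hAU,
        show (U * G₀ * V) * A = U * G₀ * (V * A) from by noncomm_ring, ← hAV]
      noncomm_ring
    have hcore : matComm P (matComm A G₀) = 0 := comm_core hP2 hphp hpgp hg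
    rw [hgeo, htr, hAcomm, hconj, hcore]
    simp [matComm]
end Main
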